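/- (Rate bound for systematic codes with good joint spectra) Let F = {F_n: X^n → X^{m_n}} be a sequence of asymptotically good (δ = 0) linear codes that are systematic, meaning all n input symbols appear directly among the m_n output symbols. Then the sup-rate satisfies R̄(F) = limsup_n n/m_n ≤ 1/|X|. -/

import Mathlib

open Finset Filter

open scoped Classical

noncomputable def empDist {X : Type*} [Fintype X] {n : ℕ} (x : Fin n → X) : X → ℝ :=
  fun a => ((univ.filter fun i => x i = a).card : ℝ) / n

noncomputable def specS {X : Type*} [Fintype X] {n : ℕ}
    (A : Finset (Fin n → X)) (P : X → ℝ) : ℝ :=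
  ((A.filter fun x => empDist x = P).card : ℝ) / (A.card : ℝ)

noncomputable def jointSpec {X Y : Type*} [Fintype X] [Fintype Y] {n m : ℕ}
    (f : (Fin n → X) → (Fin m → Y)) (P : X → ℝ) (Q : Y → ℝ) : ℝ :=
  ((univ.filter fun x : Fin n → X => empDist x = P ∧ empDist (f x) = Q).card : ℝ) /
    ((Fintype.card X : ℝ) ^ n)

noncomputable def fullJointSpec (X Y : Type*) [Fintype X] [Fintype Y] (n m : ℕ)
    (P : X → ℝ) (Q : Y → ℝ) : ℝ :=
  specS (univ : Finset (Fin n → X)) P * specS (univ : Finset (Fin m → Y)) Q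

noncomputable def alphaE {X Y : Type*} [Fintype X] [Fintype Y] {n m : ℕ} {Ω : Type*}
    [Fintype Ω] (μ : Ω → ℝ) (F : Ω → (Fin n → X) → (Fin m → Y))
    (P : X → ℝ) (Q : Y → ℝ) : ℝ :=
  (∑ ω, μ ω * jointSpec (F ω) P Q) / fullJointSpec X Y n m P Q

def permAct {X : Type*} {n : ℕ} (σ : Equiv.Perm (Fin n)) (x : Fin n → X) : Fin n → X :=
  fun i => x (σ.symm i)

noncomputable def entH {X : Type*} [Fintype X] (P : X → ℝ) : ℝ :=
  ∑ a, -(P a * Real.log (P a))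

noncomputable def binEnt (x : ℝ) : ℝ := -(x * Real.log x) - (1 - x) * Real.log (1 - x)

/-! Feed the constant word `a^n` (`a ≠ 0`) to the code. It is alone in its type class, so the
ratio of joint to product spectrum at `(a^n, F(a^n))` is at least `|X|^m / |T|`, with `T` the
type class of `F(a^n)`. Systematicity puts at least `n` copies of `a` into `F(a^n)`. If `n > t m`
for some `t > 1/|X|`, weighing words by the product measure with mass `t` on `a` and
`(1-t)/(|X|-1)` elsewhere gives `|T| ≤ |X|^m exp(-m D(t ‖ 1/|X|))`, so the ratio is at least
`exp(m D) ≥ exp(n D)`, which asymptotic goodness forbids. -/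

open Real

section TypeClass

variable {X : Type*} [Fintype X] {n : ℕ}

noncomputable def typeClass (x : Fin n → X) : Finset (Fin n → X) :=
  univ.filter fun x' => empDist x' = empDist x

lemma mem_typeClass_self (x : Fin n → X) : x ∈ typeClass x := by
  simp [typeClass]

lemma card_filter_eq_of_empDist_eq {x x' : Fin n → X} (h : empDist x' = empDist x) (a : X) :
    #{i | x' i = a} = #{i | x i = a} := by
  rcases n.eq_zero_or_pos with rfl | hn
  · simp
  have := congrFun h a
  simp only [empDist] at this
  exact_mod_cast (div_left_inj' (by positivity : (n : ℝ) ≠ 0)).1 this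

lemma prod_eq_pow_card_filter {M : Type*} [CommMonoid M] (w : X → M) (x : Fin n → X) :
    ∏ i, w (x i) = ∏ a, w a ^ #{i | x i = a} := by
  rw [← Finset.prod_fiberwise' univ x w]
  simp only [prod_const]

lemma prod_eq_of_empDist_eq {M : Type*} [CommMonoid M] (w : X → M) {x x' : Fin n → X}
    (h : empDist x' = empDist x) : ∏ i, w (x' i) = ∏ i, w (x i) := by
  simp only [prod_eq_pow_card_filter, card_filter_eq_of_empDist_eq h]

lemma typeClass_const (a : X) : typeClass (fun _ : Fin n => a) = {fun _ => a} := by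
  refine eq_singleton_iff_unique_mem.2 ⟨mem_typeClass_self _, fun x hx => ?_⟩
  have hcard := card_filter_eq_of_empDist_eq (mem_filter.1 hx).2 a
  rw [filter_true_of_mem fun _ _ => rfl] at hcard
  funext i
  exact card_filter_eq_iff.1 hcard i (mem_univ i)

lemma card_typeClass_mul_prod_le (w : X → ℝ) (hw0 : 0 ≤ w) (hw1 : ∑ a, w a = 1)
    (x : Fin n → X) : #(typeClass x) * ∏ i, w (x i) ≤ 1 := by
  calc #(typeClass x) * ∏ i, w (x i) = ∑ x' ∈ typeClass x, ∏ i, w (x' i) := by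
        rw [← nsmul_eq_mul, ← sum_const]
        exact sum_congr rfl fun x' hx' => (prod_eq_of_empDist_eq w (mem_filter.1 hx').2).symm
    _ ≤ ∑ x' : Fin n → X, ∏ i, w (x' i) :=
        sum_le_sum_of_subset_of_nonneg (subset_univ _) fun _ _ _ => prod_nonneg fun i _ => hw0 _
    _ = 1 := by rw [← Fintype.sum_pow, hw1, one_pow]

lemma specS_univ_empDist (x : Fin n → X) :
    specS (univ : Finset (Fin n → X)) (empDist x) =
      #(typeClass x) / (Fintype.card X : ℝ) ^ n := by
  simp [specS, typeClass]

end TypeClass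

lemma card_pow_le_mul_card_typeClass {X Y : Type*} [Fintype X] [Fintype Y] {n m : ℕ}
    (f : (Fin n → X) → (Fin m → Y)) {x : Fin n → X} (hx : typeClass x = {x}) {B : ℝ}
    (hB : jointSpec f (empDist x) (empDist (f x)) /
        fullJointSpec X Y n m (empDist x) (empDist (f x)) ≤ B) :
    (Fintype.card Y : ℝ) ^ m ≤ B * #(typeClass (f x)) := by
  have hX : (0 : ℝ) < Fintype.card X ^ n := by
    have := Fintype.card_pos (α := Fin n → X) (h := ⟨x⟩)
    rw [Fintype.card_fun, Fintype.card_fin] at this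
    exact_mod_cast this
  have hY : (0 : ℝ) < Fintype.card Y ^ m := by
    have := Fintype.card_pos (α := Fin m → Y) (h := ⟨f x⟩)
    rw [Fintype.card_fun, Fintype.card_fin] at this
    exact_mod_cast this
  have hT : (0 : ℝ) < #(typeClass (f x)) := by
    exact_mod_cast card_pos.2 ⟨_, mem_typeClass_self (f x)⟩
  have hJ : (1 : ℝ) ≤ #{x' | empDist x' = empDist x ∧ empDist (f x') = empDist (f x)} := by
    exact_mod_cast card_pos.2 ⟨x, by simp⟩
  rw [jointSpec, fullJointSpec, specS_univ_empDist, specS_univ_empDist, hx, card_singleton,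
    Nat.cast_one] at hB
  rw [div_le_iff₀ (by positivity), div_mul_div_comm, one_mul, mul_div_assoc',
    div_le_div_iff₀ hX (by positivity)] at hB
  exact (le_mul_of_one_le_left hY.le hJ).trans (le_of_mul_le_mul_right (by linarith) hX)

noncomputable def klBernoulli (p r : ℝ) : ℝ :=
  p * log (p / r) + (1 - p) * log ((1 - p) / (1 - r))

lemma klBernoulli_pos {p r : ℝ} (hp0 : 0 < p) (hp1 : p < 1) (hr0 : 0 < r) (hr1 : r < 1)
    (hpr : p ≠ r) : 0 < klBernoulli p r := by
  have h1 : log (r / p) < r / p - 1 :=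
    log_lt_sub_one_of_pos (by positivity) (by rw [Ne, div_eq_one_iff_eq hp0.ne']; exact hpr.symm)
  have h2 : log ((1 - r) / (1 - p)) ≤ (1 - r) / (1 - p) - 1 :=
    log_le_sub_one_of_pos (div_pos (by linarith) (by linarith))
  have e1 : p * (r / p - 1) = r - p := by field_simp
  have e2 : (1 - p) * ((1 - r) / (1 - p) - 1) = p - r := by
    field_simp [(by linarith : (1 - p) ≠ 0)]; ring
  rw [klBernoulli, ← inv_div r, ← inv_div (1 - r), log_inv, log_inv]
  nlinarith [mul_lt_mul_of_pos_left h1 hp0,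
    mul_le_mul_of_nonneg_left h2 (by linarith : 0 ≤ 1 - p)]

lemma exp_mul_klBernoulli_le {q t : ℝ} (hq : 1 < q) (ht : 1 / q ≤ t) (ht1 : t < 1) {k l : ℕ}
    (hk : t * (k + l) ≤ k) :
    exp ((k + l) * klBernoulli t (1 / q)) ≤ q ^ (k + l) * t ^ k * ((1 - t) / (q - 1)) ^ l := by
  have hq0 : 0 < q := by linarith
  have ht0 : 0 < t := lt_of_lt_of_le (by positivity) ht
  set s := (1 - t) / (q - 1) with hs
  have hs0 : 0 < s := div_pos (by linarith) (by linarith)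
  have hst : s ≤ t := by
    rw [hs, div_le_iff₀ (by linarith)]
    rw [div_le_iff₀ hq0] at ht
    linarith
  have hkl : klBernoulli t (1 / q) = t * log (q * t) + (1 - t) * log (q * s) := by
    rw [klBernoulli, hs]
    congr 3 <;> field_simp
  rw [← log_le_log_iff (exp_pos _) (by positivity), log_exp,
    log_mul (by positivity) (by positivity), log_mul (by positivity) (by positivity),
    log_pow, log_pow, log_pow, hkl,
    log_mul hq0.ne' ht0.ne', log_mul hq0.ne' hs0.ne']
  have hlog : log s ≤ log t := log_le_log hs0 hst
  push_cast
  -- the two sides differ by `(k - t (k + l)) (log t - log s) ≥ 0`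
  nlinarith [mul_le_mul_of_nonneg_left hlog (by linarith : (0:ℝ) ≤ k - t * (k + l))]

lemma exp_mul_klBernoulli_le_of_systematic {X : Type*} [Fintype X] [Nontrivial X] {n m : ℕ}
    (f : (Fin n → X) → (Fin m → X)) {ι : Fin n → Fin m} (hι : Function.Injective ι)
    (hsys : ∀ x i, f x (ι i) = x i) (a : X) {t : ℝ} (ht : 1 / (Fintype.card X : ℝ) ≤ t)
    (ht1 : t < 1) (htn : t * m ≤ n) {B : ℝ}
    (hB : jointSpec f (empDist fun _ : Fin n => a) (empDist (f fun _ => a)) /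
        fullJointSpec X X n m (empDist fun _ : Fin n => a) (empDist (f fun _ => a)) ≤ B) :
    exp (m * klBernoulli t (1 / Fintype.card X)) ≤ B := by
  set q : ℝ := (Fintype.card X : ℝ)
  set y := f fun _ => a
  set s := (1 - t) / (q - 1)
  have hq : 1 < q := Nat.one_lt_cast.2 Fintype.one_lt_card
  have ht0 : 0 < t := lt_of_lt_of_le (by positivity) ht
  have hs0 : 0 < s := div_pos (by linarith) (by linarith)
  have hnk : n ≤ #{i | y i = a} :=
    calc n = #(univ : Finset (Fin n)) := by simp
      _ ≤ _ := card_le_card_of_injOn ι (fun i _ => by simp [y, hsys]) hι.injOn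
  have hm : #{i | y i = a} + #{i | ¬y i = a} = m := by
    simpa using card_filter_add_card_filter_not (s := univ) fun i => y i = a
  have hw : ∑ b, (if b = a then t else s) = 1 := by
    rw [← add_sum_erase univ _ (mem_univ a), if_pos rfl,
      sum_congr rfl fun b hb => if_neg (ne_of_mem_erase hb), sum_const,
      card_erase_of_mem (mem_univ a), card_univ, nsmul_eq_mul, Nat.cast_pred Fintype.card_pos]
    rw [add_comm, ← eq_sub_iff_add_eq]
    exact mul_div_cancel₀ _ (by linarith)
  have hprod : ∏ i, (if y i = a then t else s) = t ^ #{i | y i = a} * s ^ #{i | ¬y i = a} := by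
    rw [prod_ite, prod_const, prod_const]
  have hT := card_typeClass_mul_prod_le _ (fun b => by positivity) hw y
  rw [hprod] at hT
  have hpow : q ^ m ≤ B * #(typeClass y) :=
    card_pow_le_mul_card_typeClass f (typeClass_const a) hB
  have hKL := exp_mul_klBernoulli_le hq ht ht1 (k := #{i | y i = a}) (l := #{i | ¬y i = a})
    (by rw [← Nat.cast_add, hm]; exact htn.trans (by exact_mod_cast hnk))
  rw [← Nat.cast_add, hm, mul_assoc] at hKL
  have hB0 : 0 ≤ B :=
    (pos_of_mul_pos_left ((pow_pos (by linarith) m).trans_le hpow) (Nat.cast_nonneg _)).le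
  calc exp (m * klBernoulli t (1 / q))
        ≤ q ^ m * (t ^ #{i | y i = a} * s ^ #{i | ¬y i = a}) := hKL
    _ ≤ B * #(typeClass y) * (t ^ #{i | y i = a} * s ^ #{i | ¬y i = a}) := by gcongr
    _ ≤ B := by rw [mul_assoc]; exact mul_le_of_le_one_right hB0 hT

theorem stmt17 {X : Type*} [Fintype X] [AddCommGroup X] [Nontrivial X]
    (m : ℕ → ℕ) (f : ∀ n, (Fin n → X) →+ (Fin (m n) → X))
    (hgood : ∀ ε > (0 : ℝ), ∀ᶠ n : ℕ in atTop, ∀ x : Fin n → X, x ≠ 0 → ∀ y : Fin (m n) → X,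
      jointSpec (⇑(f n)) (empDist x) (empDist y) /
          fullJointSpec X X n (m n) (empDist x) (empDist y)
        ≤ Real.exp (n * ε))
    (hsys : ∀ n, ∃ ι : Fin n → Fin (m n), Function.Injective ι ∧
      ∀ x : Fin n → X, ∀ i, f n x (ι i) = x i) :
    ∀ ε > (0 : ℝ), ∀ᶠ n : ℕ in atTop,
      (n : ℝ) / (m n : ℝ) ≤ 1 / (Fintype.card X : ℝ) + ε := by
  intro ε hε
  obtain ⟨a, ha⟩ := exists_ne (0 : X)
  set q : ℝ := (Fintype.card X : ℝ)
  have hq : 1 / q < 1 := (div_lt_one (by positivity)).2 (Nat.one_lt_cast.2 Fintype.one_lt_card)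
  set t := min (1 / q + ε) ((1 / q + 1) / 2)
  have ht : 1 / q < t := lt_min (by linarith) (by linarith)
  have ht1 : t < 1 := (min_le_right _ _).trans_lt (by linarith)
  have hD := klBernoulli_pos (by positivity) ht1 (by positivity) hq ht.ne'
  filter_upwards [hgood _ (half_pos hD), eventually_gt_atTop 0] with n hgood_n hn
  obtain ⟨ι, hι, hsys_n⟩ := hsys n
  have hnm : n ≤ m n := by simpa using Fintype.card_le_of_injective ι hι
  have hm : (0 : ℝ) < m n := by exact_mod_cast hn.trans_le hnm
  suffices (n : ℝ) / m n ≤ t from this.trans (min_le_left _ _)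
  refine le_of_not_gt fun hlt => ?_
  have hexp := exp_mul_klBernoulli_le_of_systematic (f n) hι hsys_n a ht.le ht1
    ((lt_div_iff₀ hm).1 hlt).le (hgood_n _ (fun h => ha (congrFun h ⟨0, hn⟩)) _)
  have hle : (m n : ℝ) * klBernoulli t (1 / q) ≤ n * (klBernoulli t (1 / q) / 2) :=
    exp_le_exp.1 hexp
  nlinarith [(by exact_mod_cast hnm : (n : ℝ) ≤ m n)]
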